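/- arXiv:2103.09328 — 8 statements merged into one kernel-verified Lean document; each statement's English description precedes it below -/
import Mathlib

section
/- For every μ > 0 and every p ∈ ℝ one has ∫_{−2μ}^{2μ} (−log(|u|/(2μ)))·cos(p·u) du > 0. -/
/-!
After the substitution `u = 2μ t` and by evenness, the integral is `4μ ∫₀¹ (-log t) cos (q t) dt`
with `q = 2μ p`. For `q = 0` this is `4μ ∫₀¹ -log t dt = 4μ`. Otherwise, integrating by parts
twice (against `sin (q t) / q`, then against `(1 - cos (q t)) / q²`) gives
`∫₀¹ (-log t) cos (q t) dt = (1 - cos q) / q² + ∫₀¹ (1 - cos (q t)) / (q t)² dt`,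
a nonnegative term plus the integral of a nonnegative function that is positive near `0`.
Both integrations by parts are one use of the fundamental theorem of calculus for a single
primitive, whose value at the logarithmic singularity `t = 0` is taken as a limit.
-/

open MeasureTheory Real Filter Topology intervalIntegral

lemma integral_symm_eq_two_smul_of_even {E : Type*} [NormedAddCommGroup E] [NormedSpace ℝ E]
    {f : ℝ → E} (hf : ∀ x, f (-x) = f x) {a : ℝ} (hfi : IntervalIntegrable f volume 0 a) :
    ∫ x in -a..a, f x = (2 : ℝ) • ∫ x in 0..a, f x := by
  have hfi' : IntervalIntegrable f volume (-a) 0 := by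
    simpa [hf] using ((IntervalIntegrable.iff_comp_neg (f := f)).1 hfi).symm
  rw [← integral_add_adjacent_intervals hfi' hfi, two_smul]
  congr 1
  simpa [hf] using (integral_comp_neg (a := 0) (b := a) f).symm

lemma one_sub_cos_div_sq_nonneg (x : ℝ) : 0 ≤ (1 - cos x) / x ^ 2 :=
  div_nonneg (sub_nonneg.2 (cos_le_one x)) (sq_nonneg x)

lemma one_sub_cos_div_sq_le (x : ℝ) : (1 - cos x) / x ^ 2 ≤ 1 / 2 := by
  rcases eq_or_ne x 0 with rfl | hx
  · norm_num
  rw [div_le_iff₀ (by positivity)]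
  linarith [one_sub_sq_div_two_le_cos (x := x)]

lemma one_sub_cos_div_sq_pos {x : ℝ} (hx : x ≠ 0) (hx' : |x| < 2 * π) :
    0 < (1 - cos x) / x ^ 2 := by
  have hcos : cos x ≠ 1 := by
    rw [Ne, cos_eq_one_iff_of_lt_of_lt (by linarith [neg_abs_le x])
      ((le_abs_self x).trans_lt hx')]
    exact hx
  exact div_pos (sub_pos.2 ((cos_le_one x).lt_of_ne hcos)) (by positivity)

lemma intervalIntegrable_one_sub_cos_div_sq (q a b : ℝ) :
    IntervalIntegrable (fun t => (1 - cos (q * t)) / (q * t) ^ 2) volume a b := by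
  refine (intervalIntegrable_const (c := (1 / 2 : ℝ))).mono_fun'
    (by fun_prop : Measurable _).aestronglyMeasurable (Eventually.of_forall fun t => ?_)
  dsimp only
  rw [norm_of_nonneg (one_sub_cos_div_sq_nonneg _)]
  exact one_sub_cos_div_sq_le _

lemma intervalIntegrable_neg_log_mul_cos (q a b : ℝ) :
    IntervalIntegrable (fun t => -log t * cos (q * t)) volume a b :=
  intervalIntegrable_log'.neg.mul_continuousOn (by fun_prop)

lemma integral_one_sub_cos_div_sq_pos {q : ℝ} (hq : q ≠ 0) :
    0 < ∫ t in (0 : ℝ)..1, (1 - cos (q * t)) / (q * t) ^ 2 := by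
  set δ := min 1 (π / |q|)
  have hδ : 0 < δ := lt_min one_pos (by positivity)
  rw [← integral_add_adjacent_intervals (intervalIntegrable_one_sub_cos_div_sq q 0 δ)
    (intervalIntegrable_one_sub_cos_div_sq q δ 1)]
  refine add_pos_of_pos_of_nonneg ?_ ?_
  · refine intervalIntegral_pos_of_pos_on (intervalIntegrable_one_sub_cos_div_sq q 0 δ)
      (fun t ht => one_sub_cos_div_sq_pos (mul_ne_zero hq ht.1.ne') ?_) hδ
    have htδ : t < π / |q| := ht.2.trans_le (min_le_right _ _)
    rw [abs_mul, abs_of_pos ht.1]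
    calc |q| * t < |q| * (π / |q|) := by gcongr
      _ = π := by field_simp
      _ < 2 * π := by linarith [pi_pos]
  · exact integral_nonneg (min_le_left _ _) fun t _ => one_sub_cos_div_sq_nonneg _

lemma hasDerivAt_one_sub_cos_div_sub_log_mul_sin {q t : ℝ} (hq : q ≠ 0) (ht : 0 < t) :
    HasDerivAt (fun t => (1 - cos (q * t)) / (q ^ 2 * t) - log t * sin (q * t) / q)
      (-log t * cos (q * t) - (1 - cos (q * t)) / (q * t) ^ 2) t := by
  have hlin : HasDerivAt (fun t => q * t) q t := by simpa using (hasDerivAt_id t).const_mul q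
  have hden : HasDerivAt (fun t => q ^ 2 * t) (q ^ 2) t := by
    simpa using (hasDerivAt_id t).const_mul (q ^ 2)
  refine ((hlin.cos.const_sub 1).div hden (by positivity)).sub
    (((hasDerivAt_log ht.ne').mul hlin.sin).div_const q) |>.congr_deriv ?_
  field_simp
  ring

lemma abs_one_sub_cos_div_sub_log_mul_sin_le {q t : ℝ} (hq : q ≠ 0) (ht : 0 < t) :
    |(1 - cos (q * t)) / (q ^ 2 * t) - log t * sin (q * t) / q| ≤ t / 2 + |t * log t| := by
  have hcos : |(1 - cos (q * t)) / (q ^ 2 * t)| ≤ t / 2 := by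
    have h : (1 - cos (q * t)) / (q ^ 2 * t) = t * ((1 - cos (q * t)) / (q * t) ^ 2) := by
      field_simp
    rw [h, abs_mul, abs_of_pos ht, abs_of_nonneg (one_sub_cos_div_sq_nonneg _)]
    linarith [mul_le_mul_of_nonneg_left (one_sub_cos_div_sq_le (q * t)) ht.le]
  have hsin : |log t * sin (q * t) / q| ≤ |t * log t| := by
    rw [abs_div, abs_mul, abs_mul, div_le_iff₀ (abs_pos.2 hq)]
    calc |log t| * |sin (q * t)| ≤ |log t| * |q * t| :=
          mul_le_mul_of_nonneg_left abs_sin_le_abs (abs_nonneg _)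
      _ = |t| * |log t| * |q| := by rw [abs_mul]; ring
  exact (abs_sub _ _).trans (add_le_add hcos hsin)

lemma tendsto_one_sub_cos_div_sub_log_mul_sin {q : ℝ} (hq : q ≠ 0) :
    Tendsto (fun t => (1 - cos (q * t)) / (q ^ 2 * t) - log t * sin (q * t) / q)
      (𝓝[>] 0) (𝓝 0) := by
  have hbound : Tendsto (fun t : ℝ => t / 2 + |t * log t|) (𝓝[>] 0) (𝓝 0) := by
    refine (Continuous.tendsto' ?_ 0 0 (by simp)).mono_left nhdsWithin_le_nhds
    exact (continuous_id.div_const 2).add continuous_mul_log.abs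
  refine squeeze_zero_norm' ?_ hbound
  filter_upwards [self_mem_nhdsWithin] with t ht
  exact abs_one_sub_cos_div_sub_log_mul_sin_le hq ht

lemma integral_neg_log_mul_cos {q : ℝ} (hq : q ≠ 0) :
    ∫ t in (0 : ℝ)..1, -log t * cos (q * t)
      = (1 - cos q) / q ^ 2 + ∫ t in (0 : ℝ)..1, (1 - cos (q * t)) / (q * t) ^ 2 := by
  have hftc := integral_eq_sub_of_hasDerivAt_of_tendsto zero_lt_one
    (fun t ht => hasDerivAt_one_sub_cos_div_sub_log_mul_sin hq ht.1)
    ((intervalIntegrable_neg_log_mul_cos q 0 1).sub (intervalIntegrable_one_sub_cos_div_sq q 0 1))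
    (tendsto_one_sub_cos_div_sub_log_mul_sin hq)
    ((hasDerivAt_one_sub_cos_div_sub_log_mul_sin hq one_pos).continuousAt.tendsto.mono_left
      nhdsWithin_le_nhds)
  rw [integral_sub (intervalIntegrable_neg_log_mul_cos q 0 1)
    (intervalIntegrable_one_sub_cos_div_sq q 0 1)] at hftc
  simp only [mul_one, log_one, zero_mul, zero_div, sub_zero] at hftc
  linarith

lemma integral_neg_log_mul_cos_pos (q : ℝ) : 0 < ∫ t in (0 : ℝ)..1, -log t * cos (q * t) := by
  rcases eq_or_ne q 0 with rfl | hq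
  · simp [intervalIntegral.integral_neg, integral_log]
  rw [integral_neg_log_mul_cos hq]
  exact add_pos_of_nonneg_of_pos (one_sub_cos_div_sq_nonneg q) (integral_one_sub_cos_div_sq_pos hq)

lemma integral_neg_log_abs_div_mul_cos {a : ℝ} (ha : 0 < a) (p : ℝ) :
    ∫ u in -a..a, -log (|u| / a) * cos (p * u)
      = a * ∫ t in (-1)..1, -log t * cos (p * a * t) := by
  have hscale : (fun u => -log (|u| / a) * cos (p * u))
      = fun u => (fun t => -log t * cos (p * a * t)) (u / a) := by
    funext u
    rw [← abs_of_pos ha, ← abs_div, log_abs, abs_of_pos ha]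
    congr 2
    field_simp
  rw [hscale, integral_comp_div (fun t => -log t * cos (p * a * t)) ha.ne', neg_div,
    div_self ha.ne', smul_eq_mul]

/-- Positivity of the Fourier transform of the one-dimensional kernel
`L(u) = −(1/(16π))·log|u/(2μ)|·1_{[−2μ,2μ]}(u)`: for every `μ > 0` and every
`p ∈ ℝ` one has `∫_{−2μ}^{2μ} (−log(|u|/(2μ)))·cos(p·u) du > 0`. -/
theorem statement1 (μ p : ℝ) (hμ : 0 < μ) :
    0 < ∫ u in (-(2 * μ))..(2 * μ), (-Real.log (|u| / (2 * μ))) * Real.cos (p * u) := by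
  have ha : 0 < 2 * μ := by positivity
  rw [integral_neg_log_abs_div_mul_cos ha, integral_symm_eq_two_smul_of_even (by simp)
    (intervalIntegrable_neg_log_mul_cos _ 0 1), smul_eq_mul]
  have := integral_neg_log_mul_cos_pos (p * (2 * μ))
  positivity
end

section
/- For every q ∈ (0,1) and every θ ∈ ℝ one has 1 + 2·Σ_{n=1}^∞ q^{n²}·cos(n·θ) > 0 (the series converging absolutely). -/
open Complex Real

/-- Positivity of the Jacobi-theta-type weight: for `q ∈ (0,1)` and `θ ∈ ℝ`,
the series `Σ_{n≥1} q^{n²}·cos(nθ)` converges absolutely and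
`1 + 2·Σ_{n≥1} q^{n²}·cos(nθ) > 0`. -/
theorem statement5 (q θ : ℝ) (hq : q ∈ Set.Ioo (0 : ℝ) 1) :
    Summable (fun n : ℕ => |q ^ ((n + 1) ^ 2) * Real.cos (((n : ℝ) + 1) * θ)|) ∧
    0 < 1 + 2 * ∑' n : ℕ, q ^ ((n + 1) ^ 2) * Real.cos (((n : ℝ) + 1) * θ) := by
  obtain ⟨hq0, hq1⟩ := hq
  -- the real series
  set G : ℕ → ℝ := fun n => q ^ ((n + 1) ^ 2) * Real.cos (((n : ℝ) + 1) * θ) with hGdef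
  -- absolute summability
  have habs : Summable (fun n : ℕ => |G n|) := by
    have hgeo : Summable (fun n : ℕ => q ^ (n + 1)) := by
      have := (summable_geometric_of_lt_one hq0.le hq1).mul_left q
      refine this.congr fun n => ?_
      rw [← pow_succ']
    refine Summable.of_nonneg_of_le (fun n => abs_nonneg _) (fun n => ?_) hgeo
    rw [abs_mul, _root_.abs_of_nonneg (pow_nonneg hq0.le _)]
    calc q ^ ((n + 1) ^ 2) * |Real.cos (((n : ℝ) + 1) * θ)|
        ≤ q ^ ((n + 1) ^ 2) * 1 := by
          exact mul_le_mul_of_nonneg_left (Real.abs_cos_le_one _) (pow_nonneg hq0.le _)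
      _ = q ^ ((n + 1) ^ 2) := mul_one _
      _ ≤ q ^ (n + 1) := pow_le_pow_of_le_one hq0.le hq1.le (by nlinarith)
  have hG : Summable G := habs.of_abs
  refine ⟨habs, ?_⟩
  -- setup
  have hπ : (0:ℝ) < π := Real.pi_pos
  set a : ℝ := (-Real.log q) / π with ha_def
  have ha : 0 < a := div_pos (neg_pos.2 (Real.log_neg hq0 hq1)) hπ
  set b : ℂ := I * θ / (2 * π) with hb_def
  set F : ℤ → ℂ := fun n => cexp (-π * a * n ^ 2 + 2 * π * b * n) with hFdef
  have hexp : ∀ n : ℤ, (-(π:ℂ) * a * n ^ 2 + 2 * π * b * n)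
      = (Real.log q : ℂ) * n ^ 2 + (θ : ℂ) * n * I := by
    intro n
    rw [hb_def, ha_def]
    have hπ' : (π:ℂ) ≠ 0 := by exact_mod_cast hπ.ne'
    push_cast
    field_simp
  have hFval : ∀ n : ℤ, F n
      = (Real.exp (Real.log q * (n:ℝ) ^ 2) : ℂ) * cexp ((θ : ℂ) * n * I) := by
    intro n
    rw [hFdef]
    simp only
    rw [hexp n, Complex.exp_add, Complex.ofReal_exp]
    push_cast
    ring_nf
  -- pairing
  have hpair : ∀ n : ℕ, F (n + 1) + F (-(n + 1)) = ((2 * G n : ℝ) : ℂ) := by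
    intro n
    rw [hFval, hFval]
    have h1 : ((-((n:ℤ) + 1) : ℤ) : ℝ) = -(((n:ℝ)) + 1) := by push_cast; ring
    have h2 : (((n:ℤ) + 1 : ℤ) : ℝ) = ((n:ℝ)) + 1 := by push_cast; ring
    have h3 : ((-((n:ℤ) + 1) : ℤ) : ℂ) = -(((n:ℂ)) + 1) := by push_cast; ring
    have h4 : (((n:ℤ) + 1 : ℤ) : ℂ) = ((n:ℂ)) + 1 := by push_cast; ring
    rw [h1, h2, h3, h4]
    have hqexp : Real.exp (Real.log q * ((n:ℝ) + 1) ^ 2) = q ^ ((n + 1) ^ 2) := by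
      rw [show ((n:ℝ) + 1) ^ 2 = (((n + 1) ^ 2 : ℕ) : ℝ) by push_cast; ring,
        mul_comm, Real.exp_nat_mul, Real.exp_log hq0]
    have hcos : cexp ((θ:ℂ) * ((n:ℂ) + 1) * I) + cexp ((θ:ℂ) * (-((n:ℂ) + 1)) * I)
        = 2 * Complex.cos (((θ * ((n:ℝ) + 1) : ℝ)) : ℂ) := by
      rw [Complex.two_cos]
      push_cast
      ring_nf
    have hsq : (-((n:ℝ) + 1)) ^ 2 = ((n:ℝ) + 1) ^ 2 := by ring
    rw [hsq, ← mul_add, hcos, hqexp, ← Complex.ofReal_cos]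
    rw [hGdef]
    push_cast
    ring_nf
  -- summability of F
  have hτ : (0:ℝ) < ((a:ℂ) * I).im := by simp [ha]
  have hFsum : Summable F := by
    have h := (summable_jacobiTheta₂_term_iff ((θ / (2 * π) : ℝ) : ℂ) ((a:ℂ) * I)).mpr hτ
    refine h.congr fun n => ?_
    rw [jacobiTheta₂_term, hFdef]
    simp only
    congr 1
    rw [hb_def, ha_def]
    have hπ' : (π:ℂ) ≠ 0 := by exact_mod_cast hπ.ne'
    push_cast
    have : (I:ℂ) * I = -1 := Complex.I_mul_I
    field_simp
    ring_nf
    simp [Complex.I_sq]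
  have hFp : Summable fun n : ℕ => F (n + 1) :=
    hFsum.comp_injective (fun m k h => by omega)
  have hFm : Summable fun n : ℕ => F (-(n + 1)) :=
    hFsum.comp_injective (fun m k h => by omega)
  -- split the integer sum
  have hsplit : ∑' n : ℤ, F n = (∑' n : ℕ, F (n + 1)) + F 0 + ∑' n : ℕ, F (-(n + 1)) :=
    tsum_of_add_one_of_neg_add_one hFp hFm
  have hF0 : F 0 = 1 := by simp [hFdef]
  have hsum_pair : (∑' n : ℕ, F (n + 1)) + ∑' n : ℕ, F (-(n + 1))
      = ((2 * ∑' n : ℕ, G n : ℝ) : ℂ) := by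
    rw [← Summable.tsum_add hFp hFm]
    rw [show ((2 * ∑' n : ℕ, G n : ℝ) : ℂ) = ∑' n : ℕ, ((2 * G n : ℝ) : ℂ) by
      rw [← tsum_mul_left, ← Complex.ofReal_tsum]]
    exact tsum_congr hpair
  have hLHS : ∑' n : ℤ, F n = ((1 + 2 * ∑' n : ℕ, G n : ℝ) : ℂ) := by
    rw [hsplit, hF0]
    rw [add_right_comm, hsum_pair]  -- careful: (A + 1 + B)
    push_cast
    ring
  -- Poisson / Jacobi transformation
  have hare : 0 < ((a:ℂ)).re := by simpa using ha
  have htrans := Complex.tsum_exp_neg_quadratic hare b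
  -- the right-hand side is a positive real
  set c : ℝ := θ / (2 * π) with hc_def
  have hIb : I * b = ((-c : ℝ) : ℂ) := by
    rw [hb_def, hc_def]
    have hπ' : (π:ℂ) ≠ 0 := by exact_mod_cast hπ.ne'
    push_cast
    have : (I:ℂ) * I = -1 := Complex.I_mul_I
    field_simp
    ring_nf
    rw [Complex.I_sq]
    ring
  have hRterm : ∀ n : ℤ, cexp (-(π:ℂ) / a * ((n:ℂ) + I * b) ^ 2)
      = ((Real.exp (-π / a * ((n:ℝ) - c) ^ 2) : ℝ) : ℂ) := by
    intro n
    rw [hIb, Complex.ofReal_exp]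
    congr 1
    push_cast
    ring
  set R : ℝ := ∑' n : ℤ, Real.exp (-π / a * ((n:ℝ) - c) ^ 2) with hR_def
  have hRc : (∑' n : ℤ, cexp (-(π:ℂ) / a * ((n:ℂ) + I * b) ^ 2)) = ((R:ℝ) : ℂ) := by
    rw [hR_def, Complex.ofReal_tsum]
    exact tsum_congr hRterm
  -- summability of the Gaussian sum
  have hRsum : Summable fun n : ℤ => Real.exp (-π / a * ((n:ℝ) - c) ^ 2) := by
    have hbd := summable_pow_mul_jacobiTheta₂_term_bound (|c| / a) (T := 1/a)
      (by positivity) 0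
    refine hbd.of_nonneg_of_le (fun n => (Real.exp_pos _).le) (fun n => ?_)
    simp only [pow_zero, one_mul]
    apply Real.exp_le_exp.mpr
    have h3 : ((|n| : ℤ) : ℝ) = |(n:ℝ)| := Int.cast_abs
    rw [h3]
    set x := (n:ℝ) with hx
    have h2 : x * c ≤ |x| * |c| := (le_abs_self _).trans (le_of_eq (abs_mul _ _))
    have e1 : -π / a * (x - c) ^ 2 = (-π * (x - c)^2) / a := by ring
    have e2 : -π * ((1/a) * x ^ 2 - 2 * (|c|/a) * |x|) = (-π * (x ^ 2 - 2 * |c| * |x|)) / a := by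
      ring
    rw [e1, e2, div_le_div_iff_of_pos_right ha]
    nlinarith [mul_le_mul_of_nonneg_left h2 (by positivity : (0:ℝ) ≤ 2*π), sq_nonneg c,
      mul_nonneg Real.pi_pos.le (sq_nonneg c)]
  have hRpos : 0 < R := by
    rw [hR_def]
    exact Summable.tsum_pos hRsum (fun n => (Real.exp_pos _).le) 0 (Real.exp_pos _)
  -- the prefactor is a positive real
  have hpre : (1 / (a:ℂ) ^ (1/2 : ℂ)) = ((1 / a ^ (1/2 : ℝ) : ℝ) : ℂ) := by
    rw [show ((1/2:ℂ)) = ((1/2:ℝ):ℂ) by norm_num, ← Complex.ofReal_cpow ha.le]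
    norm_cast
  have hfinal : ((1 + 2 * ∑' n : ℕ, G n : ℝ) : ℂ)
      = (((1 / a ^ (1/2 : ℝ)) * R : ℝ) : ℂ) := by
    rw [← hLHS, htrans, hRc, hpre, ← Complex.ofReal_mul]
  have := Complex.ofReal_inj.mp hfinal
  rw [this]
  have : 0 < 1 / a ^ (1/2 : ℝ) := by positivity
  exact mul_pos this hRpos
end

section
/- Let w : ℝ² × ℝ² → ℝ be a measurable kernel that is symmetric of positive type, and let g : ℝ² → [0,∞) be measurable with ∫_{ℝ²}∫_{ℝ²} e^{|w(x,y)|}·g(x)·g(y) dx dy < ∞. Then ∫_{ℝ²}∫_{ℝ²} e^{w(x,y)}·g(x)·g(y) dx dy ≥ ∫_{ℝ²}∫_{ℝ²} e^{−w(x,y)}·g(x)·g(y) dx dy. -/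
/-!
Since `e^w - e^{-w} = 2 sinh w` and `sinh` is a power series in odd powers with nonnegative
coefficients, Schur's product theorem makes `sinh ∘ w`, hence `g(x) sinh w(x,y) g(y)`, a kernel
of positive type. Such a kernel `K` integrates nonnegatively against `μ ⊗ μ`: for a probability
measure, integrating `∑ᵢⱼ K(xᵢ, xⱼ) ≥ 0` over `n` independent samples gives
`n ∫ K(x,x) + n(n-1) ∬ K ≥ 0`, and `n → ∞` removes the diagonal term; a σ-finite measure is
handled by truncating to sets of finite measure on which the diagonal is bounded.
-/

open MeasureTheory Finset
open scoped ENNReal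

/-- A kernel on `ℝ² × ℝ²` is symmetric of positive type. -/
def IsSymPosType (w : (ℝ × ℝ) → (ℝ × ℝ) → ℝ) : Prop :=
  (∀ x y, w x y = w y x) ∧
  ∀ (k : ℕ) (z : Fin k → ℝ × ℝ) (c : Fin k → ℝ),
    0 ≤ ∑ i : Fin k, ∑ j : Fin k, c i * c j * w (z i) (z j)

open ProbabilityTheory
open scoped Matrix Nat

def PosType {α : Type*} (K : α → α → ℝ) : Prop :=
  ∀ (k : ℕ) (z : Fin k → α) (c : Fin k → ℝ),
    0 ≤ ∑ i : Fin k, ∑ j : Fin k, c i * c j * K (z i) (z j)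

namespace PosType

variable {α : Type*} {K L : α → α → ℝ}

lemma diag_nonneg (hK : PosType K) (x : α) : 0 ≤ K x x := by
  simpa using hK 1 ![x] ![1]

lemma iff_posSemidef (hsym : ∀ x y, K x y = K y x) :
    PosType K ↔ ∀ (k : ℕ) (z : Fin k → α), (Matrix.of fun i j => K (z i) (z j)).PosSemidef := by
  have hform : ∀ (k : ℕ) (z : Fin k → α) (c : Fin k → ℝ),
      star c ⬝ᵥ ((Matrix.of fun i j => K (z i) (z j)) *ᵥ c)
        = ∑ i, ∑ j, c i * c j * K (z i) (z j) := by
    intro k z c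
    simp only [dotProduct, Matrix.mulVec, Matrix.of_apply, star_trivial, Finset.mul_sum]
    exact Finset.sum_congr rfl fun i _ => Finset.sum_congr rfl fun j _ => by ring
  refine ⟨fun hK k z => .of_dotProduct_mulVec_nonneg ?_ fun c => hform k z c ▸ hK k z c,
    fun h k z c => hform k z c ▸ (h k z).dotProduct_mulVec_nonneg c⟩
  ext i j
  simp [hsym (z i) (z j)]

lemma mul (hK : PosType K) (hL : PosType L) (hKsym : ∀ x y, K x y = K y x)
    (hLsym : ∀ x y, L x y = L y x) : PosType fun x y => K x y * L x y := by
  rw [iff_posSemidef (fun x y => by rw [hKsym, hLsym])]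
  intro k z
  exact ((iff_posSemidef hKsym).1 hK k z).hadamard ((iff_posSemidef hLsym).1 hL k z)

lemma pow (hK : PosType K) (hsym : ∀ x y, K x y = K y x) (n : ℕ) :
    PosType fun x y => K x y ^ n := by
  induction n with
  | zero =>
    intro k z c
    simpa [Finset.sum_mul_sum, sq] using sq_nonneg (∑ i, c i)
  | succ n ih =>
    simpa only [pow_succ] using ih.mul hK (fun x y => by rw [hsym]) hsym

lemma const_mul (hK : PosType K) {a : ℝ} (ha : 0 ≤ a) : PosType fun x y => a * K x y := by
  intro k z c
  have : ∑ i, ∑ j, c i * c j * (a * K (z i) (z j)) = a * ∑ i, ∑ j, c i * c j * K (z i) (z j) := by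
    simp only [Finset.mul_sum]
    exact Finset.sum_congr rfl fun i _ => Finset.sum_congr rfl fun j _ => by ring
  rw [this]
  exact mul_nonneg ha (hK k z c)

lemma of_hasSum {K : ℕ → α → α → ℝ} (hK : ∀ n, PosType (K n))
    (hsum : ∀ x y, HasSum (fun n => K n x y) (L x y)) : PosType L := fun k z c =>
  (hasSum_sum fun i _ => hasSum_sum fun j _ => (hsum (z i) (z j)).mul_left (c i * c j)).nonneg
    fun n => hK n k z c

lemma sinh (hK : PosType K) (hsym : ∀ x y, K x y = K y x) :
    PosType fun x y => Real.sinh (K x y) :=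
  of_hasSum (fun n => (hK.pow hsym _).const_mul (by positivity : (0:ℝ) ≤ 1 / (2 * n + 1)!))
    fun x y => by simpa only [one_div_mul_eq_div] using Real.hasSum_sinh (K x y)

lemma conj (hK : PosType K) (f : α → ℝ) : PosType fun x y => f x * K x y * f y := by
  intro k z c
  convert hK k z (fun i => c i * f (z i)) using 3 with i _ j _
  ring

end PosType

lemma MeasureTheory.MeasurePreserving.integral_comp_of_aestronglyMeasurable
    {α β : Type*} [MeasurableSpace α] [MeasurableSpace β] {μ : Measure α} {ν : Measure β}
    {f : α → β} (hf : MeasurePreserving f μ ν) {g : β → ℝ} (hg : AEStronglyMeasurable g ν) :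
    ∫ x, g (f x) ∂μ = ∫ y, g y ∂ν := by
  rw [← hf.map_eq] at hg ⊢
  exact (integral_map hf.measurable.aemeasurable hg).symm

lemma measurePreserving_eval_pair {ι α : Type*} [Fintype ι] [MeasurableSpace α]
    (ν : Measure α) [IsProbabilityMeasure ν] {i j : ι} (hij : i ≠ j) :
    MeasurePreserving (fun x : ι → α => (x i, x j)) (Measure.pi fun _ => ν) (ν.prod ν) := by
  have hind : iIndepFun (fun i (x : ι → α) => x i) (Measure.pi fun _ => ν) :=
    iIndepFun_pi (X := fun _ => id) fun _ => aemeasurable_id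
  refine ⟨(measurable_pi_apply i).prodMk (measurable_pi_apply j), ?_⟩
  rw [(hind.indepFun hij).map_prod_eq_prod_map_map (measurable_pi_apply i).aemeasurable
    (measurable_pi_apply j).aemeasurable, (measurePreserving_eval _ i).map_eq,
    (measurePreserving_eval _ j).map_eq]

section

variable {α : Type*} [MeasurableSpace α] {K : α → α → ℝ}

lemma integral_pi_sum_sum (ν : Measure α) [IsProbabilityMeasure ν] (n : ℕ)
    (hint : Integrable (fun p : α × α => K p.1 p.2) (ν.prod ν))
    (hdiag : Integrable (fun x => K x x) ν) :
    ∫ x, ∑ i : Fin n, ∑ j : Fin n, K (x i) (x j) ∂(Measure.pi fun _ => ν)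
      = n * ∫ x, K x x ∂ν + n * (n - 1) * ∫ p : α × α, K p.1 p.2 ∂(ν.prod ν) := by
  have hterm : ∀ i j : Fin n, Integrable (fun x : Fin n → α => K (x i) (x j))
        (Measure.pi fun _ => ν) ∧
      ∫ x, K (x i) (x j) ∂(Measure.pi fun _ => ν)
        = if i = j then ∫ x, K x x ∂ν else ∫ p : α × α, K p.1 p.2 ∂(ν.prod ν) := by
    intro i j
    split_ifs with hij
    · subst hij
      have h := measurePreserving_eval (fun _ : Fin n => ν) i
      exact ⟨(h.integrable_comp hdiag.aestronglyMeasurable).2 hdiag,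
        h.integral_comp_of_aestronglyMeasurable (g := fun x => K x x) hdiag.aestronglyMeasurable⟩
    · have h := measurePreserving_eval_pair ν hij
      exact ⟨(h.integrable_comp hint.aestronglyMeasurable).2 hint,
        h.integral_comp_of_aestronglyMeasurable hint.aestronglyMeasurable⟩
  calc ∫ x, ∑ i : Fin n, ∑ j : Fin n, K (x i) (x j) ∂(Measure.pi fun _ => ν)
      = ∑ i : Fin n, ∑ j : Fin n,
          if i = j then ∫ x, K x x ∂ν else ∫ p : α × α, K p.1 p.2 ∂(ν.prod ν) := by
        rw [integral_finsetSum _ fun i _ => integrable_finsetSum _ fun j _ => (hterm i j).1]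
        refine Finset.sum_congr rfl fun i _ => ?_
        rw [integral_finsetSum _ fun j _ => (hterm i j).1]
        exact Finset.sum_congr rfl fun j _ => (hterm i j).2
    _ = _ := by
        simp only [sum_ite, filter_eq, mem_univ, ↓reduceIte, sum_const, card_singleton, one_smul,
          filter_ne, card_erase_of_mem, card_univ, Fintype.card_fin, nsmul_eq_mul, smul_add,
          add_right_inj]
        rcases n with _ | n <;> simp [mul_assoc]

lemma PosType.integral_nonneg_of_isProbabilityMeasure (hK : PosType K) (ν : Measure α)
    [IsProbabilityMeasure ν] (hint : Integrable (fun p : α × α => K p.1 p.2) (ν.prod ν))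
    (hdiag : Integrable (fun x => K x x) ν) :
    0 ≤ ∫ p : α × α, K p.1 p.2 ∂(ν.prod ν) := by
  set D := ∫ x, K x x ∂ν
  set I := ∫ p : α × α, K p.1 p.2 ∂(ν.prod ν)
  have hsample : ∀ n : ℕ, 0 ≤ n * D + n * (n - 1) * I := fun n => by
    rw [← integral_pi_sum_sum ν n hint hdiag]
    exact integral_nonneg fun x => by simpa using hK n x 1
  by_contra! hI
  obtain ⟨n, hn⟩ := exists_nat_gt (D / -I)
  have := hsample (n + 1)
  rw [div_lt_iff₀ (neg_pos.2 hI)] at hn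
  push_cast at this
  nlinarith

lemma PosType.integral_nonneg_of_isFiniteMeasure (hK : PosType K) (ν : Measure α)
    [IsFiniteMeasure ν] (hint : Integrable (fun p : α × α => K p.1 p.2) (ν.prod ν))
    (hdiag : Integrable (fun x => K x x) ν) :
    0 ≤ ∫ p : α × α, K p.1 p.2 ∂(ν.prod ν) := by
  rcases eq_zero_or_neZero ν with rfl | hν
  · simp
  have hc : (ν Set.univ)⁻¹ ≠ ∞ := ENNReal.inv_ne_top.2 (NeZero.ne _)
  have key := hK.integral_nonneg_of_isProbabilityMeasure ((ν Set.univ)⁻¹ • ν)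
    (by simpa [Measure.prod_smul_left, Measure.prod_smul_right] using
      (hint.smul_measure hc).smul_measure hc)
    (hdiag.smul_measure hc)
  rw [Measure.prod_smul_left, Measure.prod_smul_right, integral_smul_measure,
    integral_smul_measure, smul_smul] at key
  exact (smul_nonneg_iff_pos_imp_nonneg.1 key).1 (by
    simpa using (ENNReal.toReal_pos (NeZero.ne _) (measure_ne_top ν _)).ne')

lemma PosType.integral_nonneg (hK : PosType K) (μ : Measure α) [SigmaFinite μ]
    (hdiag : Measurable fun x => K x x)
    (hint : Integrable (fun p : α × α => K p.1 p.2) (μ.prod μ)) :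
    0 ≤ ∫ p : α × α, K p.1 p.2 ∂(μ.prod μ) := by
  set E : ℕ → Set α := fun M => spanningSets μ M ∩ {x | K x x ≤ M}
  have hEmeas : ∀ M, MeasurableSet (E M) := fun M =>
    (measurableSet_spanningSets μ M).inter (measurableSet_le hdiag measurable_const)
  have hEmono : Monotone E := fun M N h =>
    Set.inter_subset_inter (monotone_spanningSets μ h) fun x (hx : K x x ≤ M) =>
      hx.trans (Nat.cast_le.2 h)
  have hE : ∀ x, ∀ᶠ M in Filter.atTop, x ∈ E M := fun x =>
    (Filter.eventually_atTop.2 ⟨spanningSetsIndex μ x, fun M h =>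
      monotone_spanningSets μ h (mem_spanningSetsIndex μ x)⟩).and
      (tendsto_natCast_atTop_atTop.eventually_ge_atTop (K x x))
  have hcover : ⋃ M, E M ×ˢ E M = Set.univ :=
    Set.eq_univ_of_forall fun p => Set.mem_iUnion.2 ((hE p.1).and (hE p.2)).exists
  have hlim := tendsto_setIntegral_of_monotone (μ := μ.prod μ)
    (fun M => (hEmeas M).prod (hEmeas M)) (fun M N h => Set.prod_mono (hEmono h) (hEmono h))
    (by rw [hcover]; exact hint.integrableOn)
  rw [hcover, Measure.restrict_univ] at hlim
  refine ge_of_tendsto' hlim fun M => ?_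
  have : IsFiniteMeasure (μ.restrict (E M)) := isFiniteMeasure_restrict.2
    ((measure_mono Set.inter_subset_left).trans_lt (measure_spanningSets_lt_top μ M)).ne
  rw [← Measure.prod_restrict]
  refine hK.integral_nonneg_of_isFiniteMeasure _ (by
    rw [Measure.prod_restrict]; exact hint.restrict) ?_
  refine (integrable_const (M : ℝ)).mono' hdiag.aestronglyMeasurable
    ((ae_restrict_iff' (hEmeas M)).2 (Filter.Eventually.of_forall fun x hx => ?_))
  rw [Real.norm_of_nonneg (hK.diag_nonneg x)]
  exact hx.2

end

/-- For a symmetric kernel of positive type `w` and nonnegative `g`, flipping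
the sign of `w` in the exponent decreases the integral:
`∬ e^{w(x,y)} g(x) g(y) ≥ ∬ e^{−w(x,y)} g(x) g(y)`. -/
theorem statement8 (w : (ℝ × ℝ) → (ℝ × ℝ) → ℝ)
    (hwmeas : Measurable fun z : (ℝ × ℝ) × (ℝ × ℝ) => w z.1 z.2)
    (hw : IsSymPosType w)
    (g : ℝ × ℝ → ℝ) (hgmeas : Measurable g) (hg0 : ∀ x, 0 ≤ g x)
    (hfin : (∫⁻ z : (ℝ × ℝ) × (ℝ × ℝ),
        ENNReal.ofReal (Real.exp |w z.1 z.2| * g z.1 * g z.2)) < ⊤) :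
    (∫ z : (ℝ × ℝ) × (ℝ × ℝ), Real.exp (-(w z.1 z.2)) * g z.1 * g z.2)
      ≤ ∫ z : (ℝ × ℝ) × (ℝ × ℝ), Real.exp (w z.1 z.2) * g z.1 * g z.2 := by
  obtain ⟨hsym, hpos⟩ : (∀ x y, w x y = w y x) ∧ PosType w := hw
  have hG : Integrable fun z : (ℝ × ℝ) × (ℝ × ℝ) => Real.exp |w z.1 z.2| * g z.1 * g z.2 :=
    ⟨by fun_prop, (hasFiniteIntegral_iff_ofReal (ae_of_all _ fun z => by
      have := hg0 z.1; have := hg0 z.2; positivity)).2 hfin⟩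
  have hdom : ∀ v : (ℝ × ℝ) × (ℝ × ℝ) → ℝ, Measurable v → (∀ z, v z ≤ |w z.1 z.2|) →
      Integrable fun z => Real.exp (v z) * g z.1 * g z.2 := fun v hv hle =>
    hG.mono' (by fun_prop) (ae_of_all _ fun z => by
      have := hg0 z.1; have := hg0 z.2
      rw [Real.norm_of_nonneg (by positivity)]
      gcongr
      exact hle z)
  have hplus := hdom _ hwmeas fun z => le_abs_self _
  have hminus := hdom (fun z => -w z.1 z.2) hwmeas.neg fun z => neg_le_abs _
  have hsinh : ∀ z : (ℝ × ℝ) × (ℝ × ℝ), g z.1 * Real.sinh (w z.1 z.2) * g z.2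
      = (Real.exp (w z.1 z.2) * g z.1 * g z.2 - Real.exp (-(w z.1 z.2)) * g z.1 * g z.2) / 2 :=
    fun z => by rw [Real.sinh_eq]; ring
  have hwdiag : Measurable fun x => w x x := hwmeas.comp (measurable_id.prodMk measurable_id)
  have hnonneg := ((hpos.sinh hsym).conj g).integral_nonneg volume (by fun_prop)
    (by simpa only [hsinh, Pi.sub_apply, Measure.volume_eq_prod] using
      (hplus.sub hminus).div_const 2)
  rw [← Measure.volume_eq_prod] at hnonneg
  simp only [hsinh] at hnonneg
  rw [integral_div, integral_sub hplus hminus] at hnonneg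
  linarith
end

section
/- Let a ∈ ℝ and K ≥ 0, and let w₁, w₂ : ℝ² × ℝ² → ℝ be measurable symmetric kernels such that (i) for every k ∈ ℕ, all points z₁,…,z_k ∈ ℝ² and all reals c₁,…,c_k with c₁ + ⋯ + c_k = 0 one has Σ_{i,j} c_i·c_j·(w₁ − w₂)(z_i,z_j) ≥ 0, and (ii) w₁(x,x) − w₂(x,x) ≤ K for all x ∈ ℝ². Let g : ℝ² → [0,1] be measurable. Then for every n ∈ ℕ, Z_n(w₁,g,a) ≤ e^{n·a²·K} · Z_n(w₂,g,a), as an inequality in [0,∞]. -/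
open MeasureTheory Finset
open scoped ENNReal

/-- The canonical partition function `Z_n(w,g,a)` of `n` positive and `n`
negative charges interacting through the two-body potential `w`, confined by
`g`, taken in `[0,∞]`. -/
noncomputable def Zpart (w : (ℝ × ℝ) → (ℝ × ℝ) → ℝ) (g : ℝ × ℝ → ℝ) (a : ℝ)
    (n : ℕ) : ℝ≥0∞ :=
  ∫⁻ zw : (Fin n → ℝ × ℝ) × (Fin n → ℝ × ℝ),
    ENNReal.ofReal
      (Real.exp (-(a ^ 2) *
          ((∑ i : Fin n, ∑ j ∈ Ioi i, (w (zw.1 i) (zw.1 j) + w (zw.2 i) (zw.2 j))) -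
            ∑ i : Fin n, ∑ j : Fin n, w (zw.1 i) (zw.2 j))) *
        ∏ i : Fin n, g (zw.1 i) * g (zw.2 i))

/-- Diagonal + twice the strict upper triangle equals the full double sum,
for a symmetric summand. -/
lemma aux_full_sum {n : ℕ} (f : Fin n → Fin n → ℝ) (hsym : ∀ i j, f i j = f j i) :
    ∑ i, ∑ j, f i j = 2 * (∑ i, ∑ j ∈ Ioi i, f i j) + ∑ i, f i i := by
  have h1 : ∀ i : Fin n, ∑ j, f i j = (∑ j ∈ ({i} : Finset (Fin n))ᶜ, f i j) + f i i := by
    intro i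
    rw [← Finset.sum_compl_add_sum ({i} : Finset (Fin n)) (f i)]
    simp
  have h2 : ∑ i : Fin n, ∑ j ∈ ({i} : Finset (Fin n))ᶜ, f i j
      = 2 * (∑ i, ∑ j ∈ Ioi i, f i j) := by
    have h3 := Finset.sum_sum_Ioi_add_eq_sum_sum_off_diag (f := fun i j => f j i)
    beta_reduce at h3
    have h4 : ∑ i : Fin n, ∑ j ∈ ({i} : Finset (Fin n))ᶜ, f i j
        = ∑ i : Fin n, ∑ j ∈ Ioi i, (f i j + f j i) := by convert h3.symm
    rw [h4, Finset.mul_sum]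
    refine Finset.sum_congr rfl fun i _ => ?_
    rw [Finset.mul_sum]
    refine Finset.sum_congr rfl fun j _ => ?_
    rw [← hsym i j]
    ring
  calc ∑ i, ∑ j, f i j = ∑ i : Fin n, ((∑ j ∈ ({i} : Finset (Fin n))ᶜ, f i j) + f i i) :=
        Finset.sum_congr rfl fun i _ => h1 i
    _ = (∑ i : Fin n, ∑ j ∈ ({i} : Finset (Fin n))ᶜ, f i j) + ∑ i, f i i :=
        Finset.sum_add_distrib
    _ = 2 * (∑ i, ∑ j ∈ Ioi i, f i j) + ∑ i, f i i := by rw [h2]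

/-- Inverse conditioning for partition functions: if `w₁ − w₂` is positive on
charge distributions of total charge zero and `w₁(x,x) − w₂(x,x) ≤ K`, then
`Z_n(w₁,g,a) ≤ e^{n a² K}·Z_n(w₂,g,a)`. -/
theorem statement9 (a K : ℝ) (hK : 0 ≤ K)
    (w₁ w₂ : (ℝ × ℝ) → (ℝ × ℝ) → ℝ)
    (hw₁meas : Measurable fun z : (ℝ × ℝ) × (ℝ × ℝ) => w₁ z.1 z.2)
    (hw₂meas : Measurable fun z : (ℝ × ℝ) × (ℝ × ℝ) => w₂ z.1 z.2)
    (hw₁symm : ∀ x y, w₁ x y = w₁ y x) (hw₂symm : ∀ x y, w₂ x y = w₂ y x)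
    (hpos : ∀ (k : ℕ) (z : Fin k → ℝ × ℝ) (c : Fin k → ℝ), (∑ i, c i) = 0 →
      0 ≤ ∑ i : Fin k, ∑ j : Fin k, c i * c j * (w₁ (z i) (z j) - w₂ (z i) (z j)))
    (hdiag : ∀ x, w₁ x x - w₂ x x ≤ K)
    (g : ℝ × ℝ → ℝ) (hgmeas : Measurable g)
    (hg01 : ∀ x, g x ∈ Set.Icc (0 : ℝ) 1)
    (n : ℕ) :
    Zpart w₁ g a n ≤ ENNReal.ofReal (Real.exp (n * a ^ 2 * K)) * Zpart w₂ g a n := by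
  set u : (ℝ × ℝ) → (ℝ × ℝ) → ℝ := fun x y => w₁ x y - w₂ x y with hu
  have husymm : ∀ x y, u x y = u y x := fun x y => by simp [hu, hw₁symm x y, hw₂symm x y]
  -- Key pointwise energy inequality
  have key : ∀ x y : Fin n → ℝ × ℝ,
      -(n : ℝ) * K ≤ (∑ i : Fin n, ∑ j ∈ Ioi i, (u (x i) (x j) + u (y i) (y j))) -
        ∑ i : Fin n, ∑ j : Fin n, u (x i) (y j) := by
    intro x y
    set e := (finSumFinEquiv : Fin n ⊕ Fin n ≃ Fin (n + n))
    set z : Fin (n + n) → ℝ × ℝ := fun i => Sum.elim x y (e.symm i)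
    set c : Fin (n + n) → ℝ := fun i => Sum.elim (fun _ => (1 : ℝ)) (fun _ => (-1 : ℝ)) (e.symm i)
    have hc : (∑ i, c i) = 0 := by
      rw [← Equiv.sum_comp e (fun i => c i)]
      simp [c, Fintype.sum_sum_type]
    have hS := hpos (n + n) z c hc
    have hSval : ∑ i : Fin (n + n), ∑ j : Fin (n + n), c i * c j * u (z i) (z j)
        = (∑ i : Fin n, ∑ j : Fin n, u (x i) (x j))
          + (∑ i : Fin n, ∑ j : Fin n, u (y i) (y j))
          - 2 * ∑ i : Fin n, ∑ j : Fin n, u (x i) (y j) := by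
      rw [← Equiv.sum_comp e (fun i => ∑ j, c i * c j * u (z i) (z j))]
      have : ∀ s : Fin n ⊕ Fin n, (∑ j : Fin (n + n), c (e s) * c j * u (z (e s)) (z j))
          = ∑ t : Fin n ⊕ Fin n,
              (Sum.elim (fun _ => (1:ℝ)) (fun _ => (-1:ℝ)) s) *
              (Sum.elim (fun _ => (1:ℝ)) (fun _ => (-1:ℝ)) t) *
              u (Sum.elim x y s) (Sum.elim x y t) := by
        intro s
        rw [← Equiv.sum_comp e (fun j => c (e s) * c j * u (z (e s)) (z j))]
        refine Finset.sum_congr rfl fun t _ => ?_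
        simp [c, z]
      simp only [this]
      rw [Fintype.sum_sum_type]
      simp only [Fintype.sum_sum_type, Sum.elim_inl, Sum.elim_inr]
      have hyx : ∑ i : Fin n, ∑ j : Fin n, u (y i) (x j)
          = ∑ i : Fin n, ∑ j : Fin n, u (x i) (y j) := by
        rw [Finset.sum_comm]
        exact Finset.sum_congr rfl fun i _ => Finset.sum_congr rfl fun j _ => husymm _ _
      simp only [one_mul, mul_one, neg_mul, mul_neg, neg_neg, Finset.sum_neg_distrib,
        Finset.sum_add_distrib]
      linarith [hyx]
    rw [hSval] at hS
    have hxx := aux_full_sum (fun i j => u (x i) (x j)) (fun i j => husymm _ _)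
    have hyy := aux_full_sum (fun i j => u (y i) (y j)) (fun i j => husymm _ _)
    rw [hxx, hyy] at hS
    have hIoi : (∑ i : Fin n, ∑ j ∈ Ioi i, (u (x i) (x j) + u (y i) (y j)))
        = (∑ i : Fin n, ∑ j ∈ Ioi i, u (x i) (x j))
          + ∑ i : Fin n, ∑ j ∈ Ioi i, u (y i) (y j) := by
      rw [← Finset.sum_add_distrib]
      exact Finset.sum_congr rfl fun i _ => Finset.sum_add_distrib
    have hdiagsum : (∑ i : Fin n, u (x i) (x i)) + (∑ i : Fin n, u (y i) (y i))
        ≤ 2 * n * K := by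
      have h1 : (∑ i : Fin n, u (x i) (x i)) ≤ n * K := by
        calc (∑ i : Fin n, u (x i) (x i)) ≤ ∑ _i : Fin n, K :=
              Finset.sum_le_sum fun i _ => hdiag (x i)
          _ = n * K := by simp [mul_comm]
      have h2 : (∑ i : Fin n, u (y i) (y i)) ≤ n * K := by
        calc (∑ i : Fin n, u (y i) (y i)) ≤ ∑ _i : Fin n, K :=
              Finset.sum_le_sum fun i _ => hdiag (y i)
          _ = n * K := by simp [mul_comm]
      linarith
    rw [hIoi]
    nlinarith [hS, hdiagsum]
  -- Pointwise inequality of integrands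
  have hpt : ∀ zw : (Fin n → ℝ × ℝ) × (Fin n → ℝ × ℝ),
      ENNReal.ofReal
        (Real.exp (-(a ^ 2) *
            ((∑ i : Fin n, ∑ j ∈ Ioi i, (w₁ (zw.1 i) (zw.1 j) + w₁ (zw.2 i) (zw.2 j))) -
              ∑ i : Fin n, ∑ j : Fin n, w₁ (zw.1 i) (zw.2 j))) *
          ∏ i : Fin n, g (zw.1 i) * g (zw.2 i))
      ≤ ENNReal.ofReal (Real.exp (n * a ^ 2 * K)) *
        ENNReal.ofReal
          (Real.exp (-(a ^ 2) *
              ((∑ i : Fin n, ∑ j ∈ Ioi i, (w₂ (zw.1 i) (zw.1 j) + w₂ (zw.2 i) (zw.2 j))) -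
                ∑ i : Fin n, ∑ j : Fin n, w₂ (zw.1 i) (zw.2 j))) *
            ∏ i : Fin n, g (zw.1 i) * g (zw.2 i)) := by
    intro zw
    obtain ⟨x, y⟩ := zw
    simp only
    set E₁ : ℝ := (∑ i : Fin n, ∑ j ∈ Ioi i, (w₁ (x i) (x j) + w₁ (y i) (y j))) -
      ∑ i : Fin n, ∑ j : Fin n, w₁ (x i) (y j) with hE₁
    set E₂ : ℝ := (∑ i : Fin n, ∑ j ∈ Ioi i, (w₂ (x i) (x j) + w₂ (y i) (y j))) -
      ∑ i : Fin n, ∑ j : Fin n, w₂ (x i) (y j) with hE₂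
    have hED : E₁ - E₂ = (∑ i : Fin n, ∑ j ∈ Ioi i, (u (x i) (x j) + u (y i) (y j))) -
        ∑ i : Fin n, ∑ j : Fin n, u (x i) (y j) := by
      simp only [hE₁, hE₂, hu, sub_add_eq_sub_sub, Finset.sum_sub_distrib,
        Finset.sum_add_distrib]
      ring
    have hEdiff : -(n : ℝ) * K ≤ E₁ - E₂ := by rw [hED]; exact key x y
    have hexp : Real.exp (-(a ^ 2) * E₁) ≤ Real.exp (n * a ^ 2 * K) *
        Real.exp (-(a ^ 2) * E₂) := by
      rw [← Real.exp_add]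
      apply Real.exp_le_exp.2
      have ha2 : (0 : ℝ) ≤ a ^ 2 := sq_nonneg a
      nlinarith
    have hP : (0 : ℝ) ≤ ∏ i : Fin n, g (x i) * g (y i) :=
      Finset.prod_nonneg fun i _ => mul_nonneg (hg01 (x i)).1 (hg01 (y i)).1
    rw [← ENNReal.ofReal_mul (Real.exp_nonneg _)]
    apply ENNReal.ofReal_le_ofReal
    exact le_of_le_of_eq (mul_le_mul_of_nonneg_right hexp hP) (mul_assoc _ _ _)
  calc Zpart w₁ g a n ≤ ∫⁻ zw : (Fin n → ℝ × ℝ) × (Fin n → ℝ × ℝ),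
        ENNReal.ofReal (Real.exp (n * a ^ 2 * K)) *
        ENNReal.ofReal
          (Real.exp (-(a ^ 2) *
              ((∑ i : Fin n, ∑ j ∈ Ioi i, (w₂ (zw.1 i) (zw.1 j) + w₂ (zw.2 i) (zw.2 j))) -
                ∑ i : Fin n, ∑ j : Fin n, w₂ (zw.1 i) (zw.2 j))) *
            ∏ i : Fin n, g (zw.1 i) * g (zw.2 i)) := lintegral_mono hpt
    _ = ENNReal.ofReal (Real.exp (n * a ^ 2 * K)) * Zpart w₂ g a n := by
        rw [Zpart, lintegral_const_mul' _ _ ENNReal.ofReal_ne_top]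
end

section
/- Let w₀, w₁ : ℝ² × ℝ² → ℝ be measurable kernels, both symmetric of positive type, such that w₁ − w₀ is also of positive type and w₁(x,x) − w₀(x,x) ≤ K for all x ∈ ℝ² and some K ≥ 0. Let g : ℝ² → [0,∞) be measurable, let a ∈ ℝ, and assume the finiteness condition holds for each of the kernels w₀ and w₁. Then Ξ(w₁,g,a) ≤ 2·Ξ(w₀, 2·e^{a²K/2}·g, a), the inequality taken in [0,∞]. -/
open MeasureTheory Finset
open scoped ENNReal

/-- `Q_n(w,g,a)`: the expectation value at the zero field configuration of the
`n`-th power of the smeared cosine vertex operator. -/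
noncomputable def Qpart (w : (ℝ × ℝ) → (ℝ × ℝ) → ℝ) (g : ℝ × ℝ → ℝ) (a : ℝ)
    (n : ℕ) : ℝ≥0∞ :=
  (2 : ℝ≥0∞)⁻¹ ^ n *
    ∑ ε : Fin n → Bool,
      ∫⁻ x : Fin n → ℝ × ℝ,
        ENNReal.ofReal
          (Real.exp (-(a ^ 2) * ∑ i : Fin n, ∑ j ∈ Ioi i,
              (if ε i then (1 : ℝ) else -1) * (if ε j then (1 : ℝ) else -1) *
                w (x i) (x j)) *
            ∏ i : Fin n, g (x i))

/-- The generating series `Ξ(w,g,a) = Σ_{n≥0} Q_n(w,g,a)/n!`. -/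
noncomputable def Xi (w : (ℝ × ℝ) → (ℝ × ℝ) → ℝ) (g : ℝ × ℝ → ℝ) (a : ℝ) : ℝ≥0∞ :=
  ∑' n : ℕ, Qpart w g a n / (n.factorial : ℝ≥0∞)

/-- The finiteness condition for a kernel `w` and a confinement `g`. -/
def FinCond (w : (ℝ × ℝ) → (ℝ × ℝ) → ℝ) (g : ℝ × ℝ → ℝ) (a : ℝ) : Prop :=
  ∀ k : ℕ,
    (∫⁻ z : Fin k → ℝ × ℝ,
      ENNReal.ofReal
        (Real.exp (a ^ 2 * ∑ i : Fin k, ∑ j ∈ Ioi i, |w (z i) (z j)|) *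
          ∏ i : Fin k, g (z i))) < ⊤

/-!
Write `Δ = w₁ - w₀` and `s_i = ±1` for the signs. Applying the positive type of `Δ` to the
coefficients `s_i` and splitting off the diagonal gives
`∑_{i<j} s_i s_j Δ(x_i,x_j) ≥ -½ ∑_i Δ(x_i,x_i) ≥ -nK/2`.
Hence the integrand of `Q_n(w₁,g,a)` is bounded pointwise by that of `Q_n(w₀,g,a)` times
`e^{na²K/2}`, i.e. by the integrand of `Q_n(w₀, e^{a²K/2} g, a)`. Summing over `n` gives
`Ξ(w₁,g,a) ≤ Ξ(w₀, e^{a²K/2} g, a)`, and the factors `2` only enlarge the right-hand side.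
-/

section SumIoi

variable {ι : Type*} [Fintype ι] [LinearOrder ι] [LocallyFiniteOrderTop ι]
  [LocallyFiniteOrderBot ι]

theorem Finset.sum_sum_eq_sum_diag_add_two_mul_sum_sum_Ioi {R : Type*} [NonAssocSemiring R]
    (f : ι → ι → R) (hf : ∀ i j, f i j = f j i) :
    ∑ i, ∑ j, f i j = ∑ i, f i i + 2 * ∑ i, ∑ j ∈ Ioi i, f i j := by
  have hoff : ∑ i, ∑ j ∈ Ioi i, (f j i + f i j) = ∑ i, ∑ j ∈ {i}ᶜ, f j i :=
    sum_sum_Ioi_add_eq_sum_sum_off_diag f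
  simp only [fun i j => hf j i, ← two_mul, ← mul_sum] at hoff
  rw [hoff, ← sum_add_distrib]
  exact sum_congr rfl fun i _ => Fintype.sum_eq_add_sum_compl i (f i)

theorem Finset.neg_sum_diag_div_two_le_sum_sum_Ioi {R : Type*} [Field R] [LinearOrder R]
    [IsStrictOrderedRing R] (f : ι → ι → R) (hf : ∀ i j, f i j = f j i)
    (hpos : 0 ≤ ∑ i, ∑ j, f i j) :
    -(∑ i, f i i) / 2 ≤ ∑ i, ∑ j ∈ Ioi i, f i j := by
  rw [sum_sum_eq_sum_diag_add_two_mul_sum_sum_Ioi f hf] at hpos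
  linarith

end SumIoi

-- `spin (ε i)` is the sign factor of `Qpart`, definitionally.
def spin (b : Bool) : ℝ := if b then 1 else -1

theorem spin_mul_self (b : Bool) : spin b * spin b = 1 := by
  cases b <;> norm_num [spin]

def pairEnergy {α ι : Type*} [Fintype ι] [LinearOrder ι] [LocallyFiniteOrderTop ι]
    (w : α → α → ℝ) (c : ι → ℝ) (x : ι → α) : ℝ :=
  ∑ i, ∑ j ∈ Ioi i, c i * c j * w (x i) (x j)

section PairEnergy

variable {α ι : Type*} [Fintype ι] [LinearOrder ι] [LocallyFiniteOrderTop ι]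
  [LocallyFiniteOrderBot ι]

theorem pairEnergy_sub_card_mul_div_two_le {w₀ w₁ : α → α → ℝ} {K : ℝ}
    (hw₀ : ∀ x y, w₀ x y = w₀ y x) (hw₁ : ∀ x y, w₁ x y = w₁ y x)
    (hdiag : ∀ x, w₁ x x - w₀ x x ≤ K) {c : ι → ℝ} (hc : ∀ i, c i * c i = 1) (x : ι → α)
    (hpos : 0 ≤ ∑ i, ∑ j, c i * c j * (w₁ (x i) (x j) - w₀ (x i) (x j))) :
    pairEnergy w₀ c x - Fintype.card ι * K / 2 ≤ pairEnergy w₁ c x := by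
  have hcross := neg_sum_diag_div_two_le_sum_sum_Ioi
    (fun i j => c i * c j * (w₁ (x i) (x j) - w₀ (x i) (x j)))
    (fun i j => by simp only [hw₀ (x i), hw₁ (x i)]; ring) hpos
  have hdiagsum : ∑ i, c i * c i * (w₁ (x i) (x i) - w₀ (x i) (x i)) ≤ Fintype.card ι * K := by
    simpa [hc] using sum_le_sum fun i (_ : i ∈ univ) => hdiag (x i)
  have hsplit : pairEnergy w₁ c x - pairEnergy w₀ c x =
      ∑ i, ∑ j ∈ Ioi i, c i * c j * (w₁ (x i) (x j) - w₀ (x i) (x j)) := by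
    simp only [pairEnergy, ← sum_sub_distrib, mul_sub]
  linarith

end PairEnergy

theorem Xi_le_Xi_of_integrand_le {w w' : (ℝ × ℝ) → (ℝ × ℝ) → ℝ} {g g' : ℝ × ℝ → ℝ} {a : ℝ}
    (h : ∀ (n : ℕ) (ε : Fin n → Bool) (x : Fin n → ℝ × ℝ),
      Real.exp (-(a ^ 2) * pairEnergy w (spin ∘ ε) x) * ∏ i, g (x i) ≤
        Real.exp (-(a ^ 2) * pairEnergy w' (spin ∘ ε) x) * ∏ i, g' (x i)) :
    Xi w g a ≤ Xi w' g' a :=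
  ENNReal.tsum_le_tsum fun n => ENNReal.div_le_div_right (mul_le_mul_right
    (sum_le_sum fun ε _ => lintegral_mono fun x => ENNReal.ofReal_le_ofReal (h n ε x)) _) _

theorem Xi_mono_confinement (w : (ℝ × ℝ) → (ℝ × ℝ) → ℝ) {g g' : ℝ × ℝ → ℝ} (a : ℝ)
    (hg : ∀ x, 0 ≤ g x) (hgg' : ∀ x, g x ≤ g' x) : Xi w g a ≤ Xi w g' a :=
  Xi_le_Xi_of_integrand_le fun _ _ _ => mul_le_mul_of_nonneg_left
    (prod_le_prod (fun _ _ => hg _) fun _ _ => hgg' _) (Real.exp_nonneg _)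

theorem Xi_le_Xi_exp_mul {w₀ w₁ : (ℝ × ℝ) → (ℝ × ℝ) → ℝ} {g : ℝ × ℝ → ℝ} (a : ℝ) {K : ℝ}
    (hw₀ : ∀ x y, w₀ x y = w₀ y x) (hw₁ : ∀ x y, w₁ x y = w₁ y x)
    (hdiffpos : ∀ (k : ℕ) (z : Fin k → ℝ × ℝ) (c : Fin k → ℝ),
      0 ≤ ∑ i, ∑ j, c i * c j * (w₁ (z i) (z j) - w₀ (z i) (z j)))
    (hdiag : ∀ x, w₁ x x - w₀ x x ≤ K) (hg : ∀ x, 0 ≤ g x) :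
    Xi w₁ g a ≤ Xi w₀ (fun x => Real.exp (a ^ 2 * K / 2) * g x) a := by
  refine Xi_le_Xi_of_integrand_le fun n ε x => ?_
  have henergy := pairEnergy_sub_card_mul_div_two_le hw₀ hw₁ hdiag (c := spin ∘ ε)
    (fun i => spin_mul_self (ε i)) x (hdiffpos n x (spin ∘ ε))
  rw [Fintype.card_fin] at henergy
  have hexp : -(a ^ 2) * pairEnergy w₁ (spin ∘ ε) x ≤
      -(a ^ 2) * pairEnergy w₀ (spin ∘ ε) x + n * (a ^ 2 * K / 2) := by
    nlinarith [mul_le_mul_of_nonneg_left henergy (sq_nonneg a)]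
  calc Real.exp (-(a ^ 2) * pairEnergy w₁ (spin ∘ ε) x) * ∏ i, g (x i)
      ≤ Real.exp (-(a ^ 2) * pairEnergy w₀ (spin ∘ ε) x + n * (a ^ 2 * K / 2)) *
          ∏ i, g (x i) :=
        mul_le_mul_of_nonneg_right (Real.exp_le_exp.2 hexp) (prod_nonneg fun i _ => hg _)
    _ = Real.exp (-(a ^ 2) * pairEnergy w₀ (spin ∘ ε) x) *
          ∏ i, (Real.exp (a ^ 2 * K / 2) * g (x i)) := by
        rw [Real.exp_add, Real.exp_nat_mul, prod_mul_distrib, prod_const, card_univ,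
          Fintype.card_fin, mul_assoc]

theorem statement13_general (a K : ℝ)
    (w₀ w₁ : (ℝ × ℝ) → (ℝ × ℝ) → ℝ)
    (hw₀ : IsSymPosType w₀) (hw₁ : IsSymPosType w₁)
    (hdiffpos : ∀ (k : ℕ) (z : Fin k → ℝ × ℝ) (c : Fin k → ℝ),
      0 ≤ ∑ i : Fin k, ∑ j : Fin k, c i * c j * (w₁ (z i) (z j) - w₀ (z i) (z j)))
    (hdiag : ∀ x, w₁ x x - w₀ x x ≤ K)
    (g : ℝ × ℝ → ℝ) (hg0 : ∀ x, 0 ≤ g x) :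
    Xi w₁ g a ≤ 2 * Xi w₀ (fun x => 2 * Real.exp (a ^ 2 * K / 2) * g x) a := by
  have hexp := Real.exp_nonneg (a ^ 2 * K / 2)
  calc Xi w₁ g a ≤ Xi w₀ (fun x => Real.exp (a ^ 2 * K / 2) * g x) a :=
        Xi_le_Xi_exp_mul a hw₀.1 hw₁.1 hdiffpos hdiag hg0
    _ ≤ Xi w₀ (fun x => 2 * Real.exp (a ^ 2 * K / 2) * g x) a :=
        Xi_mono_confinement w₀ a (fun x => mul_nonneg hexp (hg0 x)) fun x =>
          mul_le_mul_of_nonneg_right (le_mul_of_one_le_left hexp one_le_two) (hg0 x)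
    _ ≤ 2 * Xi w₀ (fun x => 2 * Real.exp (a ^ 2 * K / 2) * g x) a :=
        le_mul_of_one_le_left zero_le one_le_two

/-- Inverse conditioning for the generating series: if `w₁ − w₀` is of positive
type with diagonal bounded by `K`, then `Ξ(w₁,g,a) ≤ 2·Ξ(w₀, 2e^{a²K/2}·g, a)`. -/
theorem statement13 (a K : ℝ) (hK : 0 ≤ K)
    (w₀ w₁ : (ℝ × ℝ) → (ℝ × ℝ) → ℝ)
    (hw₀meas : Measurable fun z : (ℝ × ℝ) × (ℝ × ℝ) => w₀ z.1 z.2)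
    (hw₁meas : Measurable fun z : (ℝ × ℝ) × (ℝ × ℝ) => w₁ z.1 z.2)
    (hw₀ : IsSymPosType w₀) (hw₁ : IsSymPosType w₁)
    (hdiffpos : ∀ (k : ℕ) (z : Fin k → ℝ × ℝ) (c : Fin k → ℝ),
      0 ≤ ∑ i : Fin k, ∑ j : Fin k, c i * c j * (w₁ (z i) (z j) - w₀ (z i) (z j)))
    (hdiag : ∀ x, w₁ x x - w₀ x x ≤ K)
    (g : ℝ × ℝ → ℝ) (hgmeas : Measurable g) (hg0 : ∀ x, 0 ≤ g x)
    (hfin₀ : FinCond w₀ g a) (hfin₁ : FinCond w₁ g a) :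
    Xi w₁ g a ≤ 2 * Xi w₀ (fun x => 2 * Real.exp (a ^ 2 * K / 2) * g x) a :=
  statement13_general a K w₀ w₁ hw₀ hw₁ hdiffpos hdiag g hg0
end

section
/- Let A be a unital C*-algebra and let φ : A → ℂ be a linear functional that is positive (for every x ∈ A, φ(x* x) is a nonnegative real number) and normalized (φ(1) = 1). Let a ∈ A be selfadjoint and let f : ℝ → ℝ be convex and differentiable. Then φ(a) and φ(f(a)) are real numbers and φ(f(a)) ≥ f(φ(a)), where f(a) denotes the element of A obtained by applying f to a via the continuous functional calculus. -/
open scoped ComplexOrder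

/-!
Since `f` is convex and differentiable, it lies above its tangent line at `t = φ(a)`:
`f r ≥ f t + f'(t) (r - t)` for all real `r`. By monotonicity of the functional calculus this gives
`f(a) ≥ f(t) 1 + f'(t) (a - t 1)` in the spectral order of `A`, and applying the positive
normalized functional `φ` kills the linear term because `φ(a - t 1) = 0`.
-/

theorem ConvexOn.add_deriv_mul_sub_le {S : Set ℝ} {f : ℝ → ℝ} {x y : ℝ} (hf : ConvexOn ℝ S f)
    (hx : x ∈ S) (hy : y ∈ S) (hfx : DifferentiableAt ℝ f x) :
    f x + deriv f x * (y - x) ≤ f y := by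
  rcases lt_trichotomy y x with hyx | rfl | hxy
  · have h := hf.slope_le_deriv hy hx hyx hfx
    rw [slope_def_field, div_le_iff₀ (sub_pos.mpr hyx)] at h
    linarith
  · simp
  · have h := hf.deriv_le_slope hx hy hxy hfx
    rw [slope_def_field, le_div_iff₀ (sub_pos.mpr hxy)] at h
    linarith

theorem PositiveLinearMap.im_apply_eq_zero {E : Type*} [AddCommGroup E] [PartialOrder E] [Star E]
    [SelfAdjointDecompose E] [Module ℂ E] (φ : E →ₚ[ℂ] ℂ) {x : E} (hx : IsSelfAdjoint x) :
    (φ x).im = 0 := by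
  obtain ⟨p, n, hp, hn, rfl⟩ := hx.exists_nonneg_sub_nonneg
  rw [map_sub, Complex.sub_im, ← (φ.map_nonneg hp).2, ← (φ.map_nonneg hn).2, sub_self]

section CStarAlgebra

variable {A : Type*} [CStarAlgebra A] [PartialOrder A] [StarOrderedRing A]

theorem LinearMap.map_nonneg_of_map_star_mul_self_nonneg (φ : A →ₗ[ℂ] ℂ)
    (hφ : ∀ x : A, 0 ≤ φ (star x * x)) {x : A} (hx : 0 ≤ x) : 0 ≤ φ x := by
  simpa [(CFC.sqrt_nonneg x).isSelfAdjoint.star_eq, CFC.sqrt_mul_sqrt_self x] using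
    hφ (CFC.sqrt x)

theorem PositiveLinearMap.le_apply_cfc_of_forall_mul_add_le (φ : A →ₚ[ℂ] ℂ) (hφ : φ 1 = 1)
    {a : A} (ha : IsSelfAdjoint a) {g : ℝ → ℝ} (hg : ContinuousOn g (spectrum ℝ a)) {c d : ℝ}
    (hcd : ∀ r ∈ spectrum ℝ a, c * r + d ≤ g r) :
    (c : ℂ) * φ a + d ≤ φ (cfc g a) := by
  have haff : cfc (fun r => c * r + d) a = c • a + algebraMap ℝ A d := by
    rw [cfc_add .., cfc_const_mul .., cfc_id' .., cfc_const ..]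
  have hφaff : φ (c • a + algebraMap ℝ A d) = (c : ℂ) * φ a + d := by
    rw [map_add, Algebra.algebraMap_eq_smul_one, ← Complex.coe_smul, ← Complex.coe_smul,
      map_smul, map_smul, hφ]
    simp
  rw [← hφaff, ← haff]
  exact φ.monotone' (cfc_mono hcd)

end CStarAlgebra

/-- Jensen's inequality for a state on a unital C*-algebra: if `φ` is a
positive normalized linear functional, `a` is selfadjoint and `f : ℝ → ℝ` is
convex and differentiable, then `φ(a)` and `φ(f(a))` are real and
`φ(f(a)) ≥ f(φ(a))`, with `f(a)` given by the continuous functional calculus. -/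
theorem statement16 (A : Type*) [CStarAlgebra A]
    (φ : A →ₗ[ℂ] ℂ)
    (hpos : ∀ x : A, 0 ≤ φ (star x * x))
    (hnorm : φ 1 = 1)
    (a : A) (ha : IsSelfAdjoint a)
    (f : ℝ → ℝ) (hconv : ConvexOn ℝ Set.univ f) (hdiff : Differentiable ℝ f) :
    (φ a).im = 0 ∧ (φ (cfc f a)).im = 0 ∧ f ((φ a).re) ≤ (φ (cfc f a)).re := by
  let := CStarAlgebra.spectralOrder A
  have := CStarAlgebra.spectralOrderedRing A
  let ψ := PositiveLinearMap.mk₀ φ fun _ => φ.map_nonneg_of_map_star_mul_self_nonneg hpos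
  have hreal : (φ a).im = 0 := ψ.im_apply_eq_zero ha
  refine ⟨hreal, ψ.im_apply_eq_zero (cfc_predicate f a), ?_⟩
  set t := (φ a).re
  have hφa : φ a = t := Complex.ext rfl hreal
  have hjensen : (f t : ℂ) ≤ φ (cfc f a) :=
    calc (f t : ℂ) = deriv f t * φ a + ↑(f t - deriv f t * t) := by
          rw [hφa]; push_cast; ring
      _ ≤ φ (cfc f a) := ψ.le_apply_cfc_of_forall_mul_add_le hnorm ha
          hdiff.continuous.continuousOn fun r _ => by
            have := hconv.add_deriv_mul_sub_le (Set.mem_univ t) (Set.mem_univ r) (hdiff t)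
            linarith
  exact (Complex.le_def.mp hjensen).1
end

section
/- There exists m₀ > 0 such that for every m ≥ m₀ there are constants c₁ > 0 and c₂ > 0 with the following property: for every finite nonempty subset Γ of ℤ, Σ_{π ∈ 𝒫(Γ)} ∏_{γ ∈ π} exp(−(m/(2·√2))·Δ(γ)) ≤ c₁·exp(c₂·|Γ|), where 𝒫(Γ) is the (finite) set of all partitions of Γ into pairwise disjoint nonempty blocks, |Γ| is the cardinality of Γ, and Δ(γ) := max γ − min γ is the diameter of a block γ. -/
/-!
Drop the partition constraints: every partition of `Γ` is a subfamily of `Γ.powerset`, so the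
partition sum is at most `∑_{π ⊆ 𝒫(Γ)} ∏_{γ ∈ π} w γ = ∏_{γ ⊆ Γ} (1 + w γ) ≤ exp (∑_{γ ⊆ Γ} w γ)`.
With `r = exp (-m / (2√2))` the weight is `w γ = r ^ Δ(γ)`. A block with minimum `x` and diameter
`j` is a subset of `[x, x + j]`, so there are at most `2 ^ (j + 1)` of them, and the blocks with a
given minimum contribute at most `2 ∑ (2r) ^ j = 2 / (1 - 2r)` once `2r < 1`, i.e. once `m` is large.
-/

open Finset

/-- The paper's `Δ(γ)`, as a natural number. -/
def diam (γ : Finset ℤ) : ℕ := (γ.max.unbotD 0 - γ.min.untopD 0).toNat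

lemma diam_empty : diam ∅ = 0 := rfl

lemma natCast_diam_eq_max'_sub_min' {γ : Finset ℤ} (h : γ.Nonempty) :
    (diam γ : ℤ) = γ.max' h - γ.min' h := by
  rw [diam, ← coe_max' h, ← coe_min' h, WithBot.unbotD_coe, WithTop.untopD_coe,
    Int.toNat_of_nonneg (sub_nonneg.2 (min'_le_max' γ h))]

lemma cast_max_unbotD_sub_min_untopD (γ : Finset ℤ) :
    ((γ.max.unbotD 0 - γ.min.untopD 0 : ℤ) : ℝ) = diam γ := by
  rcases γ.eq_empty_or_nonempty with rfl | h
  · simp [diam_empty]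
  · rw [← Int.cast_natCast, natCast_diam_eq_max'_sub_min' h, ← coe_max' h, ← coe_min' h,
      WithBot.unbotD_coe, WithTop.untopD_coe]

lemma subset_Icc_diam_of_min_eq {γ : Finset ℤ} {x : ℤ} (hx : γ.min = x) :
    γ ⊆ Icc x (x + diam γ) := by
  have h : γ.Nonempty := ⟨x, mem_of_min hx⟩
  have hmin : γ.min' h = x := by exact_mod_cast (coe_min' h).trans hx
  intro y hy
  rw [mem_Icc, natCast_diam_eq_max'_sub_min' h, hmin]
  exact ⟨hmin ▸ min'_le γ y hy, by linarith [le_max' γ y hy]⟩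

lemma card_filter_diam_eq_le {𝒮 : Finset (Finset ℤ)} {x : ℤ} (h𝒮 : ∀ γ ∈ 𝒮, γ.min = x)
    (j : ℕ) : #{γ ∈ 𝒮 | diam γ = j} ≤ 2 ^ (j + 1) := by
  calc #{γ ∈ 𝒮 | diam γ = j}
      ≤ #(Icc x (x + j)).powerset := by
        refine card_le_card fun γ hγ => ?_
        obtain ⟨hγ𝒮, rfl⟩ := mem_filter.1 hγ
        exact mem_powerset.2 (subset_Icc_diam_of_min_eq (h𝒮 γ hγ𝒮))
    _ = 2 ^ (j + 1) := by
        rw [card_powerset, Int.card_Icc]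
        congr 1
        omega

lemma sum_pow_diam_le_of_forall_min_eq {𝒮 : Finset (Finset ℤ)} {x : ℤ}
    (h𝒮 : ∀ γ ∈ 𝒮, γ.min = x) {r : ℝ} (hr₀ : 0 ≤ r) (hr : 2 * r < 1) :
    ∑ γ ∈ 𝒮, r ^ diam γ ≤ 2 / (1 - 2 * r) := by
  have hq₀ : 0 ≤ 2 * r := by positivity
  calc ∑ γ ∈ 𝒮, r ^ diam γ
      = ∑ j ∈ 𝒮.image diam, #{γ ∈ 𝒮 | diam γ = j} • r ^ j := sum_comp (r ^ ·) diam
    _ ≤ ∑ j ∈ 𝒮.image diam, 2 * (2 * r) ^ j := by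
        refine sum_le_sum fun j _ => ?_
        rw [nsmul_eq_mul, mul_pow, ← mul_assoc, ← pow_succ']
        gcongr
        exact_mod_cast card_filter_diam_eq_le h𝒮 j
    _ = 2 * ∑ j ∈ 𝒮.image diam, (2 * r) ^ j := (mul_sum _ _ _).symm
    _ ≤ 2 * ∑' j : ℕ, (2 * r) ^ j := by
        gcongr
        exact (summable_geometric_of_lt_one hq₀ hr).sum_le_tsum _
          fun j _ => pow_nonneg hq₀ j
    _ = 2 / (1 - 2 * r) := by rw [tsum_geometric_of_lt_one hq₀ hr, div_eq_mul_inv]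

lemma sum_powerset_pow_diam_le (Γ : Finset ℤ) {r : ℝ} (hr₀ : 0 ≤ r) (hr : 2 * r < 1) :
    ∑ γ ∈ Γ.powerset, r ^ diam γ ≤ 1 + #Γ * (2 / (1 - 2 * r)) := by
  have hmaps : ∀ γ ∈ Γ.powerset.erase ∅, γ.min.untopD 0 ∈ Γ := by
    intro γ hγ
    obtain ⟨hne, hsub⟩ := mem_erase.1 hγ
    have h := nonempty_iff_ne_empty.2 hne
    rw [← coe_min' h, WithTop.untopD_coe]
    exact mem_powerset.1 hsub (min'_mem γ h)
  have hfiber : ∀ x ∈ Γ,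
      ∑ γ ∈ Γ.powerset.erase ∅ with γ.min.untopD 0 = x, r ^ diam γ ≤ 2 / (1 - 2 * r) := by
    refine fun x _ => sum_pow_diam_le_of_forall_min_eq (x := x) (fun γ hγ => ?_) hr₀ hr
    obtain ⟨hγΓ, rfl⟩ := mem_filter.1 hγ
    rw [← coe_min' (nonempty_iff_ne_empty.2 (mem_erase.1 hγΓ).1), WithTop.untopD_coe]
  rw [← add_sum_erase _ _ (empty_mem_powerset Γ), diam_empty, pow_zero,
    ← sum_fiberwise_of_maps_to hmaps, ← nsmul_eq_mul]
  exact add_le_add_right (sum_le_card_nsmul _ _ _ hfiber) 1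

lemma sum_prod_le_exp_sum_of_subset_powerset {β : Type*} {𝒜 : Finset β}
    {P : Finset (Finset β)} (hP : P ⊆ 𝒜.powerset) {f : β → ℝ} (hf : ∀ b, 0 ≤ f b) :
    ∑ π ∈ P, ∏ b ∈ π, f b ≤ Real.exp (∑ b ∈ 𝒜, f b) :=
  calc ∑ π ∈ P, ∏ b ∈ π, f b
      ≤ ∑ π ∈ 𝒜.powerset, ∏ b ∈ π, f b :=
        sum_le_sum_of_subset_of_nonneg hP fun _ _ _ => prod_nonneg fun b _ => hf b
    _ = ∏ b ∈ 𝒜, (1 + f b) := (prod_one_add 𝒜).symm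
    _ ≤ Real.exp (∑ b ∈ 𝒜, f b) := Real.prod_one_add_le_exp_sum 𝒜 hf

lemma two_mul_exp_neg_lt_one {a : ℝ} (ha : 1 < a) : 2 * Real.exp (-a) < 1 := by
  rw [Real.exp_neg, ← div_eq_mul_inv, div_lt_one (Real.exp_pos a)]
  linarith [Real.add_one_le_exp a]

/-- Combinatorial bound for the one-dimensional cluster expansion: for
sufficiently large mass `m`, the sum over all partitions `π` of a finite set of
bonds `Γ ⊆ ℤ` of the product over blocks `γ ∈ π` of `exp(−(m/(2√2))·Δ(γ))`
(with `Δ(γ) = max γ − min γ` the diameter of the block) is bounded by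
`c₁·exp(c₂·|Γ|)`. -/
theorem statement17 :
    ∃ m₀ > (0 : ℝ), ∀ m : ℝ, m₀ ≤ m → ∃ c₁ > (0 : ℝ), ∃ c₂ > (0 : ℝ),
      ∀ Γ : Finset ℤ, Γ.Nonempty →
        ∑ π ∈ Γ.powerset.powerset.filter (fun π =>
            (∅ ∉ π) ∧ (∀ γ₁ ∈ π, ∀ γ₂ ∈ π, γ₁ ≠ γ₂ → Disjoint γ₁ γ₂) ∧
              π.biUnion id = Γ),
          ∏ γ ∈ π,
            Real.exp (-(m / (2 * Real.sqrt 2)) *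
              ((γ.max.unbotD 0 - γ.min.untopD 0 : ℤ) : ℝ))
        ≤ c₁ * Real.exp (c₂ * Γ.card) := by
  refine ⟨4, by norm_num, fun m hm => ?_⟩
  set r := Real.exp (-(m / (2 * Real.sqrt 2)))
  have hr : 2 * r < 1 := by
    refine two_mul_exp_neg_lt_one ((one_lt_div (by positivity)).2 ?_)
    linarith [Real.sqrt_two_lt_three_halves]
  have hweight : ∀ γ : Finset ℤ, Real.exp (-(m / (2 * Real.sqrt 2)) *
      ((γ.max.unbotD 0 - γ.min.untopD 0 : ℤ) : ℝ)) = r ^ diam γ := fun γ => by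
    rw [cast_max_unbotD_sub_min_untopD, mul_comm, Real.exp_nat_mul]
  refine ⟨Real.exp 1, Real.exp_pos 1, 2 / (1 - 2 * r), div_pos two_pos (by linarith),
    fun Γ _ => ?_⟩
  simp only [hweight]
  calc _ ≤ Real.exp (∑ γ ∈ Γ.powerset, r ^ diam γ) :=
        sum_prod_le_exp_sum_of_subset_powerset (filter_subset _ _) fun γ => by positivity
    _ ≤ Real.exp (1 + #Γ * (2 / (1 - 2 * r))) :=
        Real.exp_le_exp.2 (sum_powerset_pow_diam_le Γ (by positivity) hr)
    _ = Real.exp 1 * Real.exp (2 / (1 - 2 * r) * #Γ) := by rw [Real.exp_add, mul_comm (#Γ : ℝ)]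
end

section
/- Let Γ be a finite nonempty subset of ℤ, let l ≥ 1, and let (a₁, …, a_l) be a sequence of natural numbers with sum r = a₁ + ⋯ + a_l. Then the number of partitions of Γ into exactly l pairwise disjoint nonempty blocks γ₁, …, γ_l, labelled so that min γ₁ < min γ₂ < ⋯ < min γ_l, which satisfy Δ(γ_i) = a_i for every i (where Δ(γ) := max γ − min γ), is at most e^{(1 + log 2)·r}. -/
/-!
A block `γ` of diameter `a` is determined by its minimum `m` together with the set
`(γ \ {m}) - m ⊆ (0, a]`, which leaves `2 ^ a` choices. The minima carry no extra
information: for blocks ordered by their minima, `min γᵢ` is the least point of `Γ` not covered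
by `γ₁, …, γᵢ₋₁`, so the minima are recovered one after the other. Hence there are at most
`2 ^ r = e ^ (r log 2) ≤ e ^ ((1 + log 2) r)` such partitions.
-/

open Finset

namespace Finset

section AddGroup

variable {α : Type*} [AddGroup α] [DecidableEq α]

def offsets (s : Finset α) (m : α) : Finset α := (s.erase m).image (· - m)

lemma insert_image_offsets {s : Finset α} {m : α} (hm : m ∈ s) :
    insert m ((s.offsets m).image (· + m)) = s := by
  rw [offsets, image_image]
  simp only [Function.comp_def, sub_add_cancel, image_id', insert_erase hm]

end AddGroup

lemma max'_eq_min'_add {s : Finset ℤ} (hs : s.Nonempty) {d : ℤ}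
    (hd : s.max.unbotD 0 - s.min.untopD 0 = d) : s.max' hs = s.min' hs + d := by
  rw [← coe_max' hs, ← coe_min' hs, WithBot.unbotD_coe, WithTop.untopD_coe] at hd
  omega

lemma offsets_min'_subset_Ioc {s : Finset ℤ} (hs : s.Nonempty) {d : ℤ}
    (hd : s.max' hs = s.min' hs + d) : s.offsets (s.min' hs) ⊆ Ioc 0 d := by
  intro y hy
  obtain ⟨x, hx, rfl⟩ := mem_image.1 hy
  obtain ⟨hxm, hxs⟩ := mem_erase.1 hx
  have hlo := s.min'_le x hxs
  have hhi := s.le_max' x hxs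
  rw [mem_Ioc]
  omega

end Finset

section OrderedPartition

variable {ι α : Type*} [LinearOrder ι] [LinearOrder α] {γ : ι → Finset α}

lemma monotone_min'_of_min_lt (hne : ∀ i, (γ i).Nonempty)
    (hlt : ∀ i j, i < j → (γ i).min < (γ j).min) :
    Monotone fun i => (γ i).min' (hne i) :=
  StrictMono.monotone fun i j hij => by
    simpa only [← coe_min' (hne _), WithTop.coe_lt_coe] using hlt i j hij

lemma isLeast_min'_sdiff_biUnion [Fintype ι] (hne : ∀ i, (γ i).Nonempty)
    (hdisj : ∀ i j, i ≠ j → Disjoint (γ i) (γ j))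
    (hmono : Monotone fun i => (γ i).min' (hne i)) (i : ι) :
    IsLeast ↑(univ.biUnion γ \ (univ.filter (· < i)).biUnion γ) ((γ i).min' (hne i)) := by
  refine ⟨?_, fun x hx => ?_⟩
  · refine mem_sdiff.2 ⟨mem_biUnion.2 ⟨i, mem_univ i, min'_mem _ _⟩, fun hmem => ?_⟩
    obtain ⟨j, hj, hxj⟩ := mem_biUnion.1 hmem
    exact disjoint_left.1 (hdisj i j (mem_filter.1 hj).2.ne') (min'_mem _ _) hxj
  · obtain ⟨hxΓ, hxi⟩ := mem_sdiff.1 hx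
    obtain ⟨k, -, hxk⟩ := mem_biUnion.1 hxΓ
    have hik : i ≤ k := not_lt.1 fun hki =>
      hxi (mem_biUnion.2 ⟨k, mem_filter.2 ⟨mem_univ k, hki⟩, hxk⟩)
    exact (hmono hik).trans ((γ k).min'_le x hxk)

end OrderedPartition

def orderedPartitionsWithDiam (Γ : Finset ℤ) {l : ℕ} (a : Fin l → ℕ) :
    Set (Fin l → Finset ℤ) :=
  {γ | (∀ i, (γ i).Nonempty) ∧
    (∀ i j, i ≠ j → Disjoint (γ i) (γ j)) ∧
    (univ.biUnion γ = Γ) ∧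
    (∀ i j : Fin l, i < j → (γ i).min < (γ j).min) ∧
    (∀ i, ((γ i).max.unbotD 0) - ((γ i).min.untopD 0) = (a i : ℤ))}

namespace orderedPartitionsWithDiam

variable {Γ : Finset ℤ} {l : ℕ} {a : Fin l → ℕ}

noncomputable def encode (γ : orderedPartitionsWithDiam Γ a) : Fin l → Finset ℤ :=
  fun i => (γ.1 i).offsets ((γ.1 i).min' (γ.2.1 i))

lemma encode_mem (γ : orderedPartitionsWithDiam Γ a) :
    encode γ ∈ Fintype.piFinset fun i => (Ioc 0 (a i : ℤ)).powerset :=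
  Fintype.mem_piFinset.2 fun i => mem_powerset.2 <|
    offsets_min'_subset_Ioc _ (max'_eq_min'_add _ (γ.2.2.2.2.2 i))

lemma encode_injective : Function.Injective (encode (Γ := Γ) (a := a)) := by
  rintro ⟨γ, hne, hdisj, hcover, hlt, _⟩ ⟨γ', hne', hdisj', hcover', hlt', _⟩ hcode
  suffices ∀ i, γ i = γ' i from Subtype.ext (funext this)
  intro i
  induction i using WellFoundedLT.induction with
  | _ i ih =>
    have hmin : (γ i).min' (hne i) = (γ' i).min' (hne' i) := by
      refine (isLeast_min'_sdiff_biUnion hne hdisj (monotone_min'_of_min_lt hne hlt) i).unique ?_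
      have hprev : (univ.filter (· < i)).biUnion γ = (univ.filter (· < i)).biUnion γ' :=
        biUnion_congr rfl fun j hj => ih j (mem_filter.1 hj).2
      rw [hcover, hprev, ← hcover']
      exact isLeast_min'_sdiff_biUnion hne' hdisj' (monotone_min'_of_min_lt hne' hlt') i
    have hoff := congrFun hcode i
    simp only [encode] at hoff
    rw [← insert_image_offsets ((γ i).min'_mem (hne i)),
      ← insert_image_offsets ((γ' i).min'_mem (hne' i)), hoff, hmin]

lemma card_le_two_pow_sum : Nat.card (orderedPartitionsWithDiam Γ a) ≤ 2 ^ ∑ i, a i := by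
  calc Nat.card (orderedPartitionsWithDiam Γ a)
      ≤ Nat.card (Fintype.piFinset fun i => (Ioc 0 (a i : ℤ)).powerset) :=
        Nat.card_le_card_of_injective (fun γ => ⟨encode γ, encode_mem γ⟩) fun γ γ' h =>
          encode_injective (congrArg Subtype.val h)
    _ = 2 ^ ∑ i, a i := by
        rw [Nat.card_eq_finsetCard, Fintype.card_piFinset, ← prod_pow_eq_pow_sum]
        simp only [card_powerset, Int.card_Ioc, sub_zero, Int.toNat_natCast]

end orderedPartitionsWithDiam

lemma two_pow_le_exp (r : ℕ) : (2 : ℝ) ^ r ≤ Real.exp ((1 + Real.log 2) * r) := by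
  rw [← Real.rpow_natCast, Real.rpow_def_of_pos two_pos, Real.exp_le_exp]
  nlinarith [r.cast_nonneg (α := ℝ)]

theorem statement19_general (Γ : Finset ℤ) (l : ℕ)
    (a : Fin l → ℕ) :
    (Nat.card {γ : Fin l → Finset ℤ //
        (∀ i, (γ i).Nonempty) ∧
        (∀ i j, i ≠ j → Disjoint (γ i) (γ j)) ∧
        (Finset.univ.biUnion γ = Γ) ∧
        (∀ i j : Fin l, i < j → (γ i).min < (γ j).min) ∧
        (∀ i, ((γ i).max.unbotD 0) - ((γ i).min.untopD 0) = (a i : ℤ))} : ℝ)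
      ≤ Real.exp ((1 + Real.log 2) * ∑ i, (a i : ℝ)) := by
  calc _ ≤ ((2 ^ ∑ i, a i : ℕ) : ℝ) :=
        Nat.cast_le.2 (orderedPartitionsWithDiam.card_le_two_pow_sum (Γ := Γ))
    _ ≤ _ := by exact_mod_cast two_pow_le_exp (∑ i, a i)

/-- Counting bound on the number of partitions with prescribed block diameters:
the number of partitions of a finite set `Γ ⊆ ℤ` into `l` pairwise disjoint
nonempty blocks `γ₁, …, γ_l`, labelled so that `min γ₁ < ⋯ < min γ_l`, with
prescribed diameters `Δ(γ_i) = a_i`, is at most `e^{(1 + log 2)·r}` where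
`r = a₁ + ⋯ + a_l`. -/
theorem statement19 (Γ : Finset ℤ) (hΓ : Γ.Nonempty) (l : ℕ) (hl : 1 ≤ l)
    (a : Fin l → ℕ) :
    (Nat.card {γ : Fin l → Finset ℤ //
        (∀ i, (γ i).Nonempty) ∧
        (∀ i j, i ≠ j → Disjoint (γ i) (γ j)) ∧
        (Finset.univ.biUnion γ = Γ) ∧
        (∀ i j : Fin l, i < j → (γ i).min < (γ j).min) ∧
        (∀ i, ((γ i).max.unbotD 0) - ((γ i).min.untopD 0) = (a i : ℤ))} : ℝ)
      ≤ Real.exp ((1 + Real.log 2) * ∑ i, (a i : ℝ)) :=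
  statement19_general Γ l a
end
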